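/- Abstract Lewy–Stampacchia inequality (upper bound): Let B be a topological vector lattice, E : B → ℝ ∪ {+∞} convex and submodular, φ ≺ ψ in B, and ū a minimizer of E on [φ, ψ]. Assume E is continuous at some point of dom E ∩ [φ, ψ]. Then for every w* ∈ ∂E(ψ) expressible as a difference of elements of the dual cone P*, there exists x* ∈ ∂E(ū), also such a difference, with w* ⊓ 0 ≺ x*. -/

import Mathlib

/-!
Minimality of `ubar` on `[φ, ψ]`, submodularity and the subgradient inequality at `ψ` give, for
`w ≥ φ`, `E ubar + ws (w - ψ)⁺ ≤ E (w ⊓ ψ) + ws (w - ψ)⁺ ≤ E w`; since `(w - ψ)⁺ ≤ (w - ubar)⁺`,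
the convex functional `E` dominates on `[φ, ∞)` the function `w ↦ E ubar + (ws ⊓ 0) (w - ubar)⁺`,
which is concave by the Riesz decomposition property and touches `E` at `ubar`. Separating the
interior of the epigraph of `E` (nonempty by the continuity assumption) from the hypograph of
that function gives an affine function squeezed between the two; as it touches `E` at `ubar`,
its linear part is a subgradient at `ubar`, and it dominates `ws ⊓ 0` on the positive cone.
-/

/-- The subdifferential of an `EReal`-valued functional, as a set of continuous
linear functionals.  It is empty outside of the domain of `E`. -/
def ESubdiff {B : Type*} [AddCommGroup B] [Module ℝ B] [TopologicalSpace B]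
    (E : B → EReal) (x : B) : Set (B →L[ℝ] ℝ) :=
  {xs | E x ≠ ⊤ ∧ ∀ z : B, ((xs (z - x) : ℝ) : EReal) + E x ≤ E z}

/-- A continuous linear functional is a difference of elements of the dual cone `P*`. -/
def IsPosDiff {B : Type*} [AddCommGroup B] [Module ℝ B] [TopologicalSpace B] [Lattice B]
    (w : B →L[ℝ] ℝ) : Prop :=
  ∃ w₁ w₂ : B →L[ℝ] ℝ, (∀ z : B, 0 ≤ z → 0 ≤ w₁ z) ∧ (∀ z : B, 0 ≤ z → 0 ≤ w₂ z) ∧ w = w₁ - w₂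

open Set

section LatticeOrderedGroup

variable {B : Type*} [AddCommGroup B] [Lattice B] [IsOrderedAddMonoid B]

theorem exists_add_eq_of_le_add {a b z : B} (ha : 0 ≤ a) (hb : 0 ≤ b) (hz : 0 ≤ z)
    (hzab : z ≤ a + b) :
    ∃ z₁ z₂ : B, z₁ ∈ Icc 0 a ∧ z₂ ∈ Icc 0 b ∧ z = z₁ + z₂ := by
  refine ⟨z ⊓ a, (z - a)⁺, ⟨le_inf hz ha, inf_le_right⟩,
    ⟨posPart_nonneg _, sup_le (sub_le_iff_le_add'.2 hzab) hb⟩, ?_⟩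
  rw [inf_eq_sub_posPart_sub, sub_add_cancel]

end LatticeOrderedGroup

/-- The real points of the epigraph; points where `f` is `⊤` contribute nothing. -/
def epigraph {X : Type*} (f : X → EReal) : Set (X × ℝ) := {p | f p.1 ≤ p.2}

section Epigraph

variable {X : Type*}

section Module
variable [AddCommGroup X] [Module ℝ X]

theorem convex_epigraph {f : X → EReal}
    (hf : ∀ (x y : X) (t : ℝ), 0 ≤ t → t ≤ 1 →
      f (t • x + (1 - t) • y) ≤ (t : EReal) * f x + ((1 - t) : EReal) * f y) :
    Convex ℝ (epigraph f) := by
  intro p hp q hq a b ha hb hab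
  obtain rfl : b = 1 - a := by linarith
  have hcomb : ((a * p.2 + (1 - a) * q.2 : ℝ) : EReal) = a * p.2 + (1 - a : ℝ) * q.2 := by
    norm_cast
  calc f (a • p.1 + (1 - a) • q.1) ≤ (a : EReal) * f p.1 + ((1 - a) : EReal) * f q.1 :=
        hf _ _ a ha (by linarith)
    _ ≤ a * p.2 + (1 - a : ℝ) * q.2 := by
        rw [← EReal.coe_one, ← EReal.coe_sub]
        exact add_le_add (mul_le_mul_of_nonneg_left hp (by exact_mod_cast ha))
          (mul_le_mul_of_nonneg_left hq (by exact_mod_cast hb))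
    _ = (a • p + (1 - a) • q).2 := hcomb.symm

end Module

section TopologicalSpace
variable [TopologicalSpace X]

theorem lt_of_mem_interior_epigraph {f : X → EReal} {p : X × ℝ}
    (hp : p ∈ interior (epigraph f)) : f p.1 < p.2 := by
  have hnhds : ∀ᶠ t in nhds p.2, (p.1, t) ∈ interior (epigraph f) :=
    (Continuous.prodMk_right p.1).continuousAt.preimage_mem_nhds (isOpen_interior.mem_nhds hp)
  obtain ⟨t, ht, htp⟩ := hnhds.exists_lt
  exact lt_of_le_of_lt (interior_subset htp : (p.1, t) ∈ epigraph f) (EReal.coe_lt_coe_iff.2 ht)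

theorem exists_forall_lt_mem_interior_epigraph {f : X → EReal} {x : X} (hx : f x ≠ ⊤)
    (hcont : ContinuousAt f x) : ∃ r : ℝ, ∀ t, r < t → (x, t) ∈ interior (epigraph f) := by
  obtain ⟨r, hr, -⟩ := EReal.lt_iff_exists_real_btwn.1 (lt_top_iff_ne_top.2 hx)
  refine ⟨r, fun t ht => mem_interior_iff_mem_nhds.2 ?_⟩
  refine Filter.mem_of_superset
    (prod_mem_nhds (hcont.preimage_mem_nhds (Iio_mem_nhds hr)) (Ioi_mem_nhds ht)) ?_
  rintro ⟨y, s⟩ ⟨hy, hs⟩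
  exact (le_of_lt hy).trans (EReal.coe_le_coe_iff.2 (le_of_lt hs))

end TopologicalSpace

variable [AddCommGroup X] [Module ℝ X] [TopologicalSpace X] [IsTopologicalAddGroup X]
  [ContinuousSMul ℝ X]

theorem exists_affine_between {f : X → EReal} {g : X → ℝ} {C : Set X}
    (hf : Convex ℝ (epigraph f)) (hg : ConcaveOn ℝ C g) (hgf : ∀ x ∈ C, (g x : EReal) ≤ f x)
    {x₀ : X} (hx₀C : x₀ ∈ C) (hx₀ : f x₀ ≠ ⊤) (hcont : ContinuousAt f x₀) :
    ∃ (ℓ : X →L[ℝ] ℝ) (a : ℝ), (∀ x ∈ C, g x ≤ ℓ x + a) ∧ ∀ x, ((ℓ x + a : ℝ) : EReal) ≤ f x := by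
  obtain ⟨r, hr⟩ := exists_forall_lt_mem_interior_epigraph hx₀ hcont
  have hdisj : Disjoint (interior (epigraph f)) {p : X × ℝ | p.1 ∈ C ∧ p.2 ≤ g p.1} := by
    refine disjoint_left.2 fun p hp hpC => (lt_of_mem_interior_epigraph hp).not_ge ?_
    exact (EReal.coe_le_coe_iff.2 hpC.2).trans (hgf _ hpC.1)
  obtain ⟨F, u, hF_int, hF_hyp⟩ :=
    geometric_hahn_banach_open hf.interior isOpen_interior hg.convex_hypograph hdisj
  have hF_epi : ∀ p ∈ epigraph f, F p ≤ u := by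
    refine fun p hp => closure_minimal (fun q hq => (hF_int q hq).le)
      (isClosed_Iic.preimage F.continuous) ?_
    rw [hf.closure_interior_eq_closure_of_nonempty_interior ⟨_, hr (r + 1) (by linarith)⟩]
    exact subset_closure hp
  set ℓ₀ : X →L[ℝ] ℝ := F.comp (ContinuousLinearMap.inl ℝ X ℝ)
  set c : ℝ := F (0, 1)
  have hF : ∀ x s, F (x, s) = ℓ₀ x + s * c := fun x s => by
    rw [← smul_eq_mul, ← map_smul, ContinuousLinearMap.comp_apply, ← map_add]
    simp
  -- The separating hyperplane is not vertical: `(x₀, g x₀)` lies below interior points `(x₀, t)`.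
  have hc : c < 0 := by
    set t := max (r + 1) (g x₀ + 1)
    have h1 := hF_int _ (hr t (by simp [t]))
    have h2 := hF_hyp (x₀, g x₀) ⟨hx₀C, le_rfl⟩
    rw [hF] at h1 h2
    have : 0 < t - g x₀ := by simp [t]
    nlinarith
  have hℓ : ∀ x, (-c)⁻¹ * ℓ₀ x + u / c = (ℓ₀ x - u) / -c := fun x => by
    field_simp [hc.ne]
    ring
  refine ⟨(-c)⁻¹ • ℓ₀, u / c, fun x hx => ?_, fun x => ?_⟩
  · have := hF_hyp (x, g x) ⟨hx, le_rfl⟩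
    rw [hF] at this
    rw [smul_apply, smul_eq_mul, hℓ, le_div_iff₀ (neg_pos.2 hc)]
    linarith
  · refine EReal.le_of_forall_lt_iff_le.1 fun s hs => EReal.coe_le_coe_iff.2 ?_
    have := hF_epi (x, s) hs.le
    rw [hF] at this
    rw [smul_apply, smul_eq_mul, hℓ, div_le_iff₀ (neg_pos.2 hc)]
    linarith

end Epigraph

section RieszKantorovich

variable {B : Type*} [AddCommGroup B] [Lattice B] [Module ℝ B] [TopologicalSpace B]
  {w x : B →L[ℝ] ℝ}

/-- `infZero w v` is `(w ⊓ 0) v`, the Riesz–Kantorovich formula for the infimum in the order dual;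
it is meaningful for `0 ≤ v`. -/
noncomputable def infZero (w : B →L[ℝ] ℝ) (v : B) : ℝ :=
  sInf {r | ∃ z : B, 0 ≤ z ∧ z ≤ v ∧ w z = r}

theorem le_infZero {v : B} {s : ℝ} (hv : 0 ≤ v) (h : ∀ z, 0 ≤ z → z ≤ v → s ≤ w z) :
    s ≤ infZero w v :=
  le_csInf ⟨0, 0, le_rfl, hv, map_zero w⟩ (by rintro _ ⟨z, hz, hzv, rfl⟩; exact h z hz hzv)

@[simp]
theorem infZero_zero : infZero w 0 = 0 := by
  have : {r | ∃ z : B, 0 ≤ z ∧ z ≤ 0 ∧ w z = r} = {0} := by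
    ext r
    constructor
    · rintro ⟨z, hz, hz', rfl⟩
      rw [le_antisymm hz' hz, map_zero]
      rfl
    · rintro rfl
      exact ⟨0, le_rfl, le_rfl, map_zero w⟩
  rw [infZero, this, csInf_singleton]

variable [IsOrderedAddMonoid B]

theorem IsPosDiff.exists_neg_le (hw : IsPosDiff w) :
    ∃ w₂ : B →L[ℝ] ℝ, (∀ z, 0 ≤ z → 0 ≤ w₂ z) ∧ ∀ z v, 0 ≤ z → z ≤ v → -w₂ v ≤ w z := by
  obtain ⟨w₁, w₂, hw₁, hw₂, rfl⟩ := hw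
  refine ⟨w₂, hw₂, fun z v hz hzv => ?_⟩
  have h₁ := hw₁ z hz
  have h₂ := hw₂ (v - z) (sub_nonneg.2 hzv)
  rw [map_sub] at h₂
  rw [sub_apply]
  linarith

theorem IsPosDiff.bddBelow (hw : IsPosDiff w) (v : B) :
    BddBelow {r | ∃ z : B, 0 ≤ z ∧ z ≤ v ∧ w z = r} := by
  obtain ⟨w₂, -, hle⟩ := hw.exists_neg_le
  exact ⟨-w₂ v, by rintro _ ⟨z, hz, hzv, rfl⟩; exact hle z v hz hzv⟩

theorem infZero_le (hw : IsPosDiff w) {z v : B} (hz : 0 ≤ z) (hzv : z ≤ v) :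
    infZero w v ≤ w z :=
  csInf_le (hw.bddBelow v) ⟨z, hz, hzv, rfl⟩

theorem infZero_anti (hw : IsPosDiff w) {v v' : B} (hv : 0 ≤ v) (hvv' : v ≤ v') :
    infZero w v' ≤ infZero w v :=
  le_infZero hv fun _ hz hzv => infZero_le hw hz (hzv.trans hvv')

theorem IsPosDiff.of_infZero_le (hw : IsPosDiff w) (h : ∀ v, 0 ≤ v → infZero w v ≤ x v) :
    IsPosDiff x := by
  obtain ⟨w₂, hw₂, hle⟩ := hw.exists_neg_le
  refine ⟨x + w₂, w₂, fun v hv => ?_, hw₂, by abel⟩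
  have := (le_infZero hv fun z hz hzv => hle z v hz hzv).trans (h v hv)
  rw [add_apply]
  linarith

variable [PosSMulMono ℝ B]

theorem mul_infZero_le (hw : IsPosDiff w) {a : ℝ} {v z : B} (ha : 0 ≤ a) (hz : 0 ≤ z)
    (hzv : z ≤ a • v) : a * infZero w v ≤ w z := by
  rcases ha.eq_or_lt with rfl | ha
  · rw [zero_smul] at hzv
    rw [zero_mul, le_antisymm hzv hz, map_zero]
  have h := infZero_le hw (smul_nonneg (inv_nonneg.2 ha.le) hz)
    (inv_smul_le_iff_of_pos ha |>.2 hzv)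
  rw [map_smul, smul_eq_mul] at h
  rwa [← le_inv_mul_iff₀ ha]

theorem mul_infZero_add_mul_infZero_le (hw : IsPosDiff w) {a b : ℝ} {v v' : B} (ha : 0 ≤ a)
    (hb : 0 ≤ b) (hv : 0 ≤ v) (hv' : 0 ≤ v') :
    a * infZero w v + b * infZero w v' ≤ infZero w (a • v + b • v') := by
  refine le_infZero (add_nonneg (smul_nonneg ha hv) (smul_nonneg hb hv')) fun z hz hzv => ?_
  obtain ⟨z₁, z₂, h₁, h₂, rfl⟩ :=
    exists_add_eq_of_le_add (smul_nonneg ha hv) (smul_nonneg hb hv') hz hzv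
  rw [map_add]
  exact add_le_add (mul_infZero_le hw ha h₁.1 h₁.2) (mul_infZero_le hw hb h₂.1 h₂.2)

theorem concaveOn_infZero_posPart (hw : IsPosDiff w) :
    ConcaveOn ℝ univ fun v => infZero w v⁺ := by
  refine ⟨convex_univ, fun v _ v' _ a b ha hb _ => ?_⟩
  have hpos : (a • v + b • v')⁺ ≤ a • v⁺ + b • v'⁺ :=
    sup_le (add_le_add (smul_le_smul_of_nonneg_left (le_posPart v) ha)
        (smul_le_smul_of_nonneg_left (le_posPart v') hb))
      (add_nonneg (smul_nonneg ha (posPart_nonneg v)) (smul_nonneg hb (posPart_nonneg v')))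
  exact (mul_infZero_add_mul_infZero_le hw ha hb (posPart_nonneg v) (posPart_nonneg v')).trans
    (infZero_anti hw (posPart_nonneg _) hpos)

end RieszKantorovich

section Subdifferential

variable {B : Type*} [AddCommGroup B] [Module ℝ B] [TopologicalSpace B] {E : B → EReal}

theorem mem_ESubdiff_of_le_of_eq {ℓ : B →L[ℝ] ℝ} {a : ℝ} {x : B}
    (hle : ∀ z, ((ℓ z + a : ℝ) : EReal) ≤ E z) (heq : E x = ((ℓ x + a : ℝ) : EReal)) :
    ℓ ∈ ESubdiff E x := by
  refine ⟨heq ▸ EReal.coe_ne_top _, fun z => ?_⟩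
  rw [heq, ← EReal.coe_add, map_sub]
  convert hle z using 2
  ring

variable [Lattice B] [IsOrderedAddMonoid B]

theorem inf_add_apply_posPart_sub_le (hsub : ∀ x y : B, E (x ⊓ y) + E (x ⊔ y) ≤ E x + E y)
    {ψ : B} {ws : B →L[ℝ] ℝ} (hws : ws ∈ ESubdiff E ψ) (hψ : E ψ ≠ ⊥) (w : B) :
    E (w ⊓ ψ) + ws (w - ψ)⁺ ≤ E w := by
  obtain ⟨r, hr⟩ : ∃ r : ℝ, E ψ = r := ⟨_, (EReal.coe_toReal hws.1 hψ).symm⟩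
  have hgrad := hws.2 (w ⊔ ψ)
  rw [sup_eq_add_posPart_sub, add_sub_cancel_left, ← sup_eq_add_posPart_sub] at hgrad
  rw [← (EReal.addLECancellable_coe r).add_le_add_iff_right, ← hr]
  calc E (w ⊓ ψ) + ws (w - ψ)⁺ + E ψ ≤ E (w ⊓ ψ) + E (w ⊔ ψ) := by
        rw [add_assoc]
        exact add_le_add le_rfl hgrad
    _ ≤ E w + E ψ := hsub w ψ

theorem add_infZero_posPart_sub_le (hsub : ∀ x y : B, E (x ⊓ y) + E (x ⊔ y) ≤ E x + E y)
    {φ ψ ubar : B} {ws : B →L[ℝ] ℝ} (hws : ws ∈ ESubdiff E ψ) (hψ : E ψ ≠ ⊥)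
    (hwsd : IsPosDiff ws) (hφψ : φ ≤ ψ) (hubarψ : ubar ≤ ψ)
    (hmin : ∀ u : B, φ ≤ u → u ≤ ψ → E ubar ≤ E u) {w : B} (hw : φ ≤ w) :
    E ubar + infZero ws (w - ubar)⁺ ≤ E w := by
  have hle : infZero ws (w - ubar)⁺ ≤ ws (w - ψ)⁺ :=
    infZero_le hwsd (posPart_nonneg _) (posPart_mono (sub_le_sub_left hubarψ w))
  calc E ubar + infZero ws (w - ubar)⁺ ≤ E ubar + ws (w - ψ)⁺ :=
        add_le_add le_rfl (EReal.coe_le_coe_iff.2 hle)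
    _ ≤ E (w ⊓ ψ) + ws (w - ψ)⁺ := add_le_add (hmin _ (le_inf hw hφψ) inf_le_right) le_rfl
    _ ≤ E w := inf_add_apply_posPart_sub_le hsub hws hψ w

end Subdifferential

theorem abstract_lewy_stampacchia_upper_general
    {B : Type*} [AddCommGroup B] [Module ℝ B] [Lattice B]
    [TopologicalSpace B] [IsTopologicalAddGroup B] [ContinuousSMul ℝ B]
    [CovariantClass B B (· + ·) (· ≤ ·)]
    (hsmul : ∀ (c : ℝ) (x : B), 0 ≤ c → 0 ≤ x → 0 ≤ c • x)
    (E : B → EReal) (hbot : ∀ x, E x ≠ ⊥)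
    (hconv : ∀ (x y : B) (t : ℝ), 0 ≤ t → t ≤ 1 →
      E (t • x + (1 - t) • y) ≤ (t : EReal) * E x + ((1 - t) : EReal) * E y)
    (hsub : ∀ x y : B, E (x ⊓ y) + E (x ⊔ y) ≤ E x + E y)
    (φ ψ : B) (hφψ : φ ≤ ψ)
    (ubar : B) (hubar : φ ≤ ubar ∧ ubar ≤ ψ ∧ ∀ u : B, φ ≤ u → u ≤ ψ → E ubar ≤ E u)
    (hcont : ∃ u : B, φ ≤ u ∧ u ≤ ψ ∧ E u ≠ ⊤ ∧ ContinuousAt E u)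
    (ws : B →L[ℝ] ℝ) (hws : ws ∈ ESubdiff E ψ) (hwsd : IsPosDiff ws) :
    ∃ xs : B →L[ℝ] ℝ, xs ∈ ESubdiff E ubar ∧ IsPosDiff xs ∧
      ∀ v : B, 0 ≤ v → sInf {r : ℝ | ∃ z : B, 0 ≤ z ∧ z ≤ v ∧ ws z = r} ≤ xs v := by
  have : IsOrderedAddMonoid B := { add_le_add_left := fun _ _ h _ => add_le_add h le_rfl }
  have : PosSMulMono ℝ B := PosSMulMono.of_smul_nonneg fun c hc x hx => hsmul c x hc hx
  obtain ⟨hφubar, hubarψ, hmin⟩ := hubar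
  obtain ⟨u, hφu, huψ, hu_top, hu_cont⟩ := hcont
  obtain ⟨rb, hrb⟩ : ∃ r : ℝ, E ubar = r :=
    ⟨_, (EReal.coe_toReal (ne_top_of_le_ne_top hu_top (hmin u hφu huψ)) (hbot ubar)).symm⟩
  have hminorant : ∀ w ∈ Ici φ, ((infZero ws (-ubar + w)⁺ + rb : ℝ) : EReal) ≤ E w := by
    intro w hw
    rw [EReal.coe_add, add_comm, ← hrb, neg_add_eq_sub]
    exact add_infZero_posPart_sub_le hsub hws (hbot ψ) hwsd hφψ hubarψ hmin hw
  have hconcave : ConcaveOn ℝ (Ici φ) fun w => infZero ws (-ubar + w)⁺ + rb :=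
    (((concaveOn_infZero_posPart hwsd).translate_right (-ubar)).subset (subset_univ _)
      (convex_Ici φ)).add_const rb
  obtain ⟨ℓ, a, hgℓ, hℓE⟩ := exists_affine_between (convex_epigraph hconv) hconcave hminorant
    hφu hu_top hu_cont
  have htouch : ℓ ubar + a = rb := by
    refine le_antisymm (by exact_mod_cast hrb ▸ hℓE ubar) ?_
    simpa using hgℓ ubar hφubar
  have hbound : ∀ v, 0 ≤ v → infZero ws v ≤ ℓ v := fun v hv => by
    have := hgℓ (ubar + v) (hφubar.trans (le_add_of_nonneg_right hv))
    rw [neg_add_cancel_left, posPart_eq_self.2 hv, map_add] at this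
    linarith
  exact ⟨ℓ, mem_ESubdiff_of_le_of_eq hℓE (by rw [hrb, htouch]), hwsd.of_infZero_le hbound, hbound⟩

theorem abstract_lewy_stampacchia_upper
    {B : Type*} [AddCommGroup B] [Module ℝ B] [Lattice B]
    [TopologicalSpace B] [IsTopologicalAddGroup B] [ContinuousSMul ℝ B]
    [T2Space B] [LocallyConvexSpace ℝ B]
    [CovariantClass B B (· + ·) (· ≤ ·)]
    (hsmul : ∀ (c : ℝ) (x : B), 0 ≤ c → 0 ≤ x → 0 ≤ c • x)
    (E : B → EReal) (hbot : ∀ x, E x ≠ ⊥)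
    (hconv : ∀ (x y : B) (t : ℝ), 0 ≤ t → t ≤ 1 →
      E (t • x + (1 - t) • y) ≤ (t : EReal) * E x + ((1 - t) : EReal) * E y)
    (hsub : ∀ x y : B, E (x ⊓ y) + E (x ⊔ y) ≤ E x + E y)
    (φ ψ : B) (hφψ : φ ≤ ψ)
    (ubar : B) (hubar : φ ≤ ubar ∧ ubar ≤ ψ ∧ ∀ u : B, φ ≤ u → u ≤ ψ → E ubar ≤ E u)
    (hcont : ∃ u : B, φ ≤ u ∧ u ≤ ψ ∧ E u ≠ ⊤ ∧ ContinuousAt E u)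
    (ws : B →L[ℝ] ℝ) (hws : ws ∈ ESubdiff E ψ) (hwsd : IsPosDiff ws) :
    ∃ xs : B →L[ℝ] ℝ, xs ∈ ESubdiff E ubar ∧ IsPosDiff xs ∧
      ∀ v : B, 0 ≤ v → sInf {r : ℝ | ∃ z : B, 0 ≤ z ∧ z ≤ v ∧ ws z = r} ≤ xs v :=
  abstract_lewy_stampacchia_upper_general hsmul E hbot hconv hsub φ ψ hφψ ubar hubar hcont ws hws
    hwsd
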